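/- arXiv:1611.08383 — 2 statements merged into one kernel-verified Lean document; each statement's English description precedes it below -/
import Mathlib

section
/- The angle α = 2·arctan(1/2) is an irrational multiple of π, i.e., α/π is irrational. -/
open Real

private def aSeq : ℕ → ℤ
  | 0 => 1
  | 1 => 3
  | (n+2) => 6 * aSeq (n+1) - 25 * aSeq n

private lemma cos_alpha : Real.cos (2 * Real.arctan (1 / 2)) = 3 / 5 := by
  rw [Real.cos_two_mul, Real.cos_arctan]
  have : Real.sqrt (1 + (1/2:ℝ)^2) = Real.sqrt (5/4) := by norm_num
  rw [this]
  have h : Real.sqrt (5/4 : ℝ) ^ 2 = 5/4 := Real.sq_sqrt (by norm_num)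
  rw [div_pow, one_pow, h]
  norm_num

private lemma aSeq_cos (n : ℕ) :
    (5:ℝ)^n * Real.cos (n * (2 * Real.arctan (1 / 2))) = aSeq n := by
  induction n using Nat.strong_induction_on with
  | _ n ih =>
    match n with
    | 0 => simp [aSeq]
    | 1 =>
      simp only [Nat.cast_one, one_mul, pow_one]
      rw [cos_alpha]; norm_num [aSeq]
    | (k+2) =>
      set α := 2 * Real.arctan (1/2) with hα
      have h1 := ih (k+1) (by omega)
      have h0 := ih k (by omega)
      have key : Real.cos ((k+2 : ℕ) * α) =
          2 * Real.cos α * Real.cos ((k+1 : ℕ) * α) - Real.cos (k * α) := by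
        have e1 : ((k+2 : ℕ) : ℝ) * α = (k+1 : ℕ) * α + α := by push_cast; ring
        have e2 : (k : ℝ) * α = (k+1 : ℕ) * α - α := by push_cast; ring
        rw [e1, e2, Real.cos_add, Real.cos_sub]
        ring
      rw [key, cos_alpha, aSeq]
      push_cast at h1 h0 key ⊢
      linear_combination (6:ℝ) * h1 - 25 * h0

private lemma aSeq_mod (n : ℕ) : aSeq (n+1) % 5 = 3 := by
  induction n using Nat.strong_induction_on with
  | _ n ih =>
    match n with
    | 0 => rfl
    | (k+1) =>
      have := ih k (by omega)
      show (6 * aSeq (k+1) - 25 * aSeq k) % 5 = 3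
      omega

/-- The angle `α = 2·arctan(1/2)` is an irrational multiple of `π`. -/
theorem alpha_div_pi_irrational :
    Irrational ((2 * Real.arctan (1 / 2)) / Real.pi) := by
  set α := 2 * Real.arctan (1/2) with hα
  rw [Irrational]
  rintro ⟨r, hr⟩
  have hπ : (Real.pi : ℝ) ≠ 0 := Real.pi_ne_zero
  have hαr : α = r * Real.pi := by
    field_simp at hr
    linarith [hr]
  set n : ℕ := 2 * r.den with hn
  have hcos : Real.cos (n * α) = 1 := by
    have : (n : ℝ) * α = (r.num : ℤ) * (2 * Real.pi) := by
      rw [hαr, hn]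
      push_cast
      rw [Rat.cast_def]
      have hden : (r.den : ℝ) ≠ 0 := by positivity
      field_simp
    rw [this, Real.cos_int_mul_two_pi]
  have h := aSeq_cos n
  rw [hcos, mul_one] at h
  have : aSeq n = 5 ^ n := by exact_mod_cast h.symm
  have hmod : aSeq n % 5 = 3 := by
    have : n = (2 * r.den - 1) + 1 := by have := r.pos; omega
    rw [this]
    exact aSeq_mod _
  rw [this] at hmod
  have : (5:ℤ) ^ n % 5 = 0 := by
    have : n = (n - 1) + 1 := by have := r.pos; omega
    rw [this, pow_succ]
    omega
  omega
end

section
/- The rotation of ℝ² about the origin by angle α = 2·arctan(1/2) has infinite order in the group of isometries of the plane (equivalently, no positive integer power of the rotation matrix [[3/5,-4/5],[4/5,3/5]] is the identity). -/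
/-- The rotation matrix by `2·arctan(1/2)`. -/
noncomputable def R : Matrix (Fin 2) (Fin 2) ℝ := !![3 / 5, -4 / 5; 4 / 5, 3 / 5]

lemma R_pow_form : ∀ n : ℕ, ∃ a b : ℤ,
    R ^ (n + 1) = !![(a : ℝ) / 5 ^ (n + 1), -(b : ℝ) / 5 ^ (n + 1);
                    (b : ℝ) / 5 ^ (n + 1), (a : ℝ) / 5 ^ (n + 1)] ∧
    a % 5 = 3 ∧ b % 5 = 4 := by
  intro n
  induction n with
  | zero =>
    refine ⟨3, 4, ?_, by norm_num, by norm_num⟩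
    rw [pow_one, R]
    norm_num
  | succ m ih =>
    obtain ⟨a, b, hR, ha, hb⟩ := ih
    refine ⟨3 * a - 4 * b, 4 * a + 3 * b, ?_, by omega, by omega⟩
    rw [pow_succ, hR, R, Matrix.mul_fin_two]
    congr 1 <;> push_cast <;> ring
  
/-- The rotation by `2·arctan(1/2)` has infinite order: no positive power of `R`
is the identity. -/
theorem rotation_infinite_order : ∀ n : ℕ, 0 < n → R ^ n ≠ 1 := by
  intro n hn hEq
  obtain ⟨m, rfl⟩ := Nat.exists_eq_add_of_lt hn
  rw [zero_add] at hEq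
  obtain ⟨a, b, hR, ha, hb⟩ := R_pow_form m
  rw [hR] at hEq
  have h00 : (a : ℝ) / 5 ^ (m + 1) = 1 := by
    have := congrFun (congrFun hEq 0) 0
    simpa [Matrix.one_apply] using this
  have ha5 : (a : ℝ) = 5 ^ (m + 1) := by
    field_simp at h00
    linarith
  have haz : a = 5 ^ (m + 1) := by exact_mod_cast ha5
  have : (5 : ℤ) ^ (m + 1) % 5 = 0 := by
    simp [pow_succ, Int.mul_emod]
  omega
end
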